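/- arXiv:2505.06812 — 4 statements merged into one kernel-verified Lean document; each statement's English description precedes it below -/
import Mathlib

section
/- Let n ≥ 1 and Q : ℂ → Matrix (Fin n) (Fin n) ℂ. The following are equivalent: (a) for every pair of indices (i, j), the entry function z ↦ Q z i j is meromorphic on all of ℂ and the function z ↦ Q (z⁻¹) i j is meromorphic at 0; (b) there exist a nonzero polynomial q ∈ ℂ[X] and an n×n matrix L with entries in ℂ[X] such that the set {z ∈ ℂ : Q z ≠ (Polynomial.eval z q)⁻¹ • (entrywise evaluation of L at z)} is finite. In other words, a matrix-valued function is meromorphic on the extended complex plane if and only if it is (off a finite set) the ratio of a matrix polynomial to a scalar polynomial. -/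
/-!
A function meromorphic on the Riemann sphere is analytic near `∞`, so by compactness it has only
finitely many singularities in `ℂ`; multiplying it by a polynomial `q` that clears each of them
gives an entire function `q f`. Meromorphy at `∞` also bounds `f`, hence `q f`, by a power of `‖z‖`
near `∞`, and the polynomial-growth version of Liouville's theorem (induction on the exponent,
dividing by `z`) makes `q f` a polynomial. For a matrix, a common denominator of the entries
works. Conversely, rational functions are meromorphic on the sphere, and changing a function on a
finite set does not affect meromorphy.
-/

open Asymptotics Bornology Filter Polynomial Set Topology

section NontriviallyNormedField

variable {𝕜 E : Type*} [NontriviallyNormedField 𝕜] [NormedAddCommGroup E] [NormedSpace 𝕜 E]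
  {f : 𝕜 → E}

theorem Asymptotics.IsBigO.dslope_zero {m : ℕ} (hf : f =O[cobounded 𝕜] (· ^ (m + 1))) :
    dslope f 0 =O[cobounded 𝕜] (· ^ m) := by
  have hone : (fun _ : 𝕜 => (1 : 𝕜)) =O[cobounded 𝕜] (· ^ (m + 1)) := by
    simpa using isBigO_pow_pow_cobounded_of_le (R := 𝕜) (Nat.zero_le (m + 1))
  have hquot := (isBigO_refl (·⁻¹) (cobounded 𝕜)).smul
    (hf.sub ((isBigO_const_one 𝕜 (f 0) _).trans hone))
  refine hquot.congr' ?_ ?_ <;> filter_upwards [eventually_ne_cobounded 0] with z hz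
  · simp [dslope_of_ne _ hz, slope_def_module]
  · rw [smul_eq_mul, pow_succ]
    field_simp

theorem Polynomial.isBigO_eval_pow_natDegree_cobounded (p : 𝕜[X]) :
    (fun z => p.eval z) =O[cobounded 𝕜] (· ^ p.natDegree) := by
  simpa using isBigO_cobounded_of_degree_le (P := p) (Q := X ^ p.natDegree) (by simp)

theorem Polynomial.meromorphicAt_eval_inv (p : 𝕜[X]) :
    MeromorphicAt (fun z => p.eval z⁻¹) 0 := by
  induction p using Polynomial.induction_on' with
  | add p q hp hq => simp only [eval_add]; fun_prop
  | monomial n a => simp only [eval_monomial]; fun_prop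

theorem MeromorphicAt.exists_isBigO_pow_cobounded (hf : MeromorphicAt (fun z => f z⁻¹) 0) :
    ∃ m : ℕ, f =O[cobounded 𝕜] (· ^ m) := by
  obtain ⟨m, hm⟩ := hf
  have hbdd := (hm.continuousAt.tendsto.isBigO_one 𝕜).comp_tendsto tendsto_inv₀_cobounded
  refine ⟨m, ((isBigO_refl (fun z : 𝕜 => z ^ m) _).smul hbdd).congr' ?_ ?_⟩ <;>
    filter_upwards [eventually_ne_cobounded 0] with z hz
  · simp [smul_smul, hz]
  · simp

theorem MeromorphicAt.eventually_analyticAt_cobounded [CompleteSpace E]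
    (hf : MeromorphicAt (fun z => f z⁻¹) 0) : ∀ᶠ z in cobounded 𝕜, AnalyticAt 𝕜 f z := by
  filter_upwards [tendsto_inv₀_cobounded'.eventually hf.eventually_analyticAt,
    eventually_ne_cobounded 0] with z hz hz0
  simpa [Function.comp_def] using hz.comp (analyticAt_inv hz0)

theorem MeromorphicOn.finite_setOf_not_analyticAt [ProperSpace 𝕜] [CompleteSpace E]
    (hf : MeromorphicOn f univ) (hf_inv : MeromorphicAt (fun z => f z⁻¹) 0) :
    {z | ¬AnalyticAt 𝕜 f z}.Finite := by
  obtain ⟨r, hr⟩ := (Metric.isBounded_iff_subset_closedBall (0 : 𝕜)).1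
    (IsCobounded.compl hf_inv.eventually_analyticAt_cobounded)
  refine ((isCompact_closedBall 0 r).finite_sdiff_of_mem_codiscreteWithin
    ((hf.mono_set (subset_univ _)).eventually_codiscreteWithin_analyticAt)).subset ?_
  exact fun z hz => ⟨hr hz, hz⟩

theorem MeromorphicOn.exists_polynomial_smul_analyticAt {S : Finset 𝕜}
    (hf : MeromorphicOn f univ) (hS : ∀ z ∉ S, AnalyticAt 𝕜 f z) :
    ∃ q : 𝕜[X], q ≠ 0 ∧ ∀ z, AnalyticAt 𝕜 (fun w => q.eval w • f w) z := by
  classical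
  induction S using Finset.induction_on generalizing f with
  | empty => exact ⟨1, one_ne_zero, fun z => by simpa using hS z (Finset.notMem_empty z)⟩
  | insert s S _ ih =>
    obtain ⟨k, hk⟩ := hf s (mem_univ s)
    have hg : MeromorphicOn (fun w => (w - s) ^ k • f w) univ := fun z hz => by
      have := hf z hz
      fun_prop
    have hgS : ∀ z ∉ S, AnalyticAt 𝕜 (fun w => (w - s) ^ k • f w) z := by
      intro z hz
      by_cases hzs : z = s
      · exact hzs ▸ hk
      · have := hS z (by simp [hzs, hz])
        fun_prop
    obtain ⟨q, hq, hqg⟩ := ih hg hgS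
    refine ⟨q * (X - C s) ^ k, mul_ne_zero hq (pow_ne_zero _ (X_sub_C_ne_zero s)), fun z => ?_⟩
    simpa [smul_smul] using hqg z

end NontriviallyNormedField

theorem Differentiable.exists_polynomial_eq_of_isBigO_pow {f : ℂ → ℂ} (hf : Differentiable ℂ f)
    {m : ℕ} (hm : f =O[cobounded ℂ] (· ^ m)) : ∃ p : ℂ[X], ∀ z, f z = p.eval z := by
  induction m generalizing f with
  | zero =>
    have hbdd : IsBounded (range f) := by
      rw [hf.continuous.isBounded_range_iff_isBigO, ← Metric.cobounded_eq_cocompact]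
      exact hm.trans (by simp only [pow_zero]; exact isBigO_const_const _ one_ne_zero _)
    obtain ⟨c, hc⟩ := hf.exists_eq_const_of_bounded hbdd
    exact ⟨C c, fun z => by simp [hc]⟩
  | succ m ih =>
    have hd : Differentiable ℂ (dslope f 0) := by
      rw [← differentiableOn_univ] at hf ⊢
      exact (Complex.differentiableOn_dslope univ_mem).mpr hf
    obtain ⟨p, hp⟩ := ih hd hm.dslope_zero
    refine ⟨C (f 0) + X * p, fun z => ?_⟩
    have hfz := sub_smul_dslope f 0 z
    simp only [sub_zero, smul_eq_mul, hp] at hfz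
    simp only [eval_add, eval_C, eval_mul, eval_X]
    linear_combination -hfz

theorem MeromorphicOn.exists_polynomial_mul_eq_eval {f : ℂ → ℂ} (hf : MeromorphicOn f univ)
    (hf_inv : MeromorphicAt (fun z => f z⁻¹) 0) :
    ∃ p q : ℂ[X], q ≠ 0 ∧ ∀ z, q.eval z * f z = p.eval z := by
  have hS := hf.finite_setOf_not_analyticAt hf_inv
  obtain ⟨q, hq, hqf⟩ := hf.exists_polynomial_smul_analyticAt (S := hS.toFinset)
    (fun z hz => by simpa using hz)
  obtain ⟨m, hm⟩ := hf_inv.exists_isBigO_pow_cobounded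
  have hgrowth : (fun z => q.eval z * f z) =O[cobounded ℂ] (· ^ (q.natDegree + m)) := by
    simpa [pow_add] using q.isBigO_eval_pow_natDegree_cobounded.mul hm
  obtain ⟨p, hp⟩ := Differentiable.exists_polynomial_eq_of_isBigO_pow
    (fun z => (hqf z).differentiableAt) hgrowth
  exact ⟨p, q, hq, hp⟩

theorem Polynomial.exists_common_denominator {ι R : Type*} [Fintype ι] [CommRing R] [IsDomain R]
    {F : ι → R → R} (hF : ∀ u, ∃ p q : R[X], q ≠ 0 ∧ ∀ z, q.eval z * F u z = p.eval z) :
    ∃ (q : R[X]) (L : ι → R[X]), q ≠ 0 ∧ ∀ u z, q.eval z * F u z = (L u).eval z := by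
  classical
  choose p q hq hpq using hF
  refine ⟨∏ u, q u, fun u => p u * ∏ v ∈ Finset.univ.erase u, q v,
    Finset.prod_ne_zero_iff.2 fun u _ => hq u, fun u z => ?_⟩
  rw [← Finset.mul_prod_erase _ _ (Finset.mem_univ u), eval_mul, eval_mul, ← hpq u z]
  ring

theorem meromorphicOn_and_meromorphicAt_inv_of_eq_ratio {𝕜 : Type*} [NontriviallyNormedField 𝕜]
    {f : 𝕜 → 𝕜} {p q : 𝕜[X]} {E : Set 𝕜} (hE : E.Finite)
    (hf : ∀ z ∉ E, f z = (q.eval z)⁻¹ * p.eval z) :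
    MeromorphicOn f univ ∧ MeromorphicAt (fun z => f z⁻¹) 0 := by
  have : Finite E := hE
  constructor
  · intro x _
    have hp := (AnalyticOnNhd.eval_polynomial p x (mem_univ x)).meromorphicAt
    have hq := (AnalyticOnNhd.eval_polynomial q x (mem_univ x)).meromorphicAt
    refine (hq.inv.mul hp).congr ?_
    filter_upwards [nhdsNE_of_nhdsNE_sdiff_finite univ_mem this] with z hz
    exact (hf z hz.2).symm
  · have hinv : Finite ((·⁻¹) ⁻¹' E : Set 𝕜) := hE.preimage inv_injective.injOn
    refine (q.meromorphicAt_eval_inv.inv.mul p.meromorphicAt_eval_inv).congr ?_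
    filter_upwards [nhdsNE_of_nhdsNE_sdiff_finite univ_mem hinv] with z hz
    exact (hf z⁻¹ hz.2).symm

theorem meromorphic_matrix_iff_ratio_of_matrix_polynomial_to_scalar_polynomial_general
    (n : ℕ) (Q : ℂ → Matrix (Fin n) (Fin n) ℂ) :
    (∀ i j : Fin n, MeromorphicOn (fun z : ℂ => Q z i j) Set.univ ∧
        MeromorphicAt (fun z : ℂ => Q z⁻¹ i j) 0) ↔
      (∃ (q : Polynomial ℂ) (L : Matrix (Fin n) (Fin n) (Polynomial ℂ)), q ≠ 0 ∧
        {z : ℂ | Q z ≠ (Polynomial.eval z q)⁻¹ • L.map (Polynomial.eval z)}.Finite) := by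
  constructor
  · intro hQ
    obtain ⟨q, L, hq, hqL⟩ := exists_common_denominator
      (F := fun (u : Fin n × Fin n) z => Q z u.1 u.2)
      fun u => (hQ u.1 u.2).1.exists_polynomial_mul_eq_eval (hQ u.1 u.2).2
    refine ⟨q, Matrix.of fun i j => L (i, j), hq,
      (finite_setOfPred_isRoot hq).subset fun z hz => ?_⟩
    by_contra hqz
    replace hqz : q.eval z ≠ 0 := hqz
    refine hz (Matrix.ext fun i j => ?_)
    simp only [Matrix.smul_apply, Matrix.map_apply, Matrix.of_apply, smul_eq_mul,
      ← hqL (i, j) z]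
    field_simp
  · rintro ⟨q, L, -, hfin⟩ i j
    refine meromorphicOn_and_meromorphicAt_inv_of_eq_ratio (p := L i j) (q := q) hfin
      fun z hz => ?_
    simp [not_not.1 hz]

/-- A matrix-valued function `Q : ℂ → Matrix (Fin n) (Fin n) ℂ` is
meromorphic on the extended complex plane (each entry is meromorphic on `ℂ` and
meromorphic at `∞`) if and only if, off a finite set, it is the ratio of a matrix
polynomial `L` to a scalar polynomial `q`. -/
theorem meromorphic_matrix_iff_ratio_of_matrix_polynomial_to_scalar_polynomial
    (n : ℕ) (hn : 1 ≤ n) (Q : ℂ → Matrix (Fin n) (Fin n) ℂ) :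
    (∀ i j : Fin n, MeromorphicOn (fun z : ℂ => Q z i j) Set.univ ∧
        MeromorphicAt (fun z : ℂ => Q z⁻¹ i j) 0) ↔
      (∃ (q : Polynomial ℂ) (L : Matrix (Fin n) (Fin n) (Polynomial ℂ)), q ≠ 0 ∧
        {z : ℂ | Q z ≠ (Polynomial.eval z q)⁻¹ • L.map (Polynomial.eval z)}.Finite) :=
  meromorphic_matrix_iff_ratio_of_matrix_polynomial_to_scalar_polynomial_general n Q
end

section
/- In the diagonalization setting, fix an index j and a point β ∈ ℂ, and suppose the diagonal entry d_j has a pole of order t ≥ 1 at β (ord_β(d_j) = −t). Define the vector ψ_j := d_j⁻¹ • T_j over RatFunc ℂ. Then: (1) Q.mulVec ψ_j = Ŝ_j (the j-th column of S⁻¹, regarded over RatFunc ℂ); (2) Ŝ_j(β) ≠ 0; (3) every nonzero component of ψ_j has ord_β ≥ t; and (4) at least one component of ψ_j has ord_β exactly equal to t. Thus ψ_j is a pole cancellation function of Q at β of exact order t. -/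
set_option synthInstance.maxHeartbeats 1000000
set_option maxHeartbeats 1000000

/-- `HasOrdAt α r k` : the rational function `r` has order `k ∈ ℤ` at `α`, i.e.
`r = (X − α)^k · (p/q)` with `p(α) ≠ 0` and `q(α) ≠ 0`. -/
def HasOrdAt (α : ℂ) (r : RatFunc ℂ) (k : ℤ) : Prop :=
  ∃ p q : Polynomial ℂ, Polynomial.eval α p ≠ 0 ∧ Polynomial.eval α q ≠ 0 ∧
    r = (RatFunc.X - RatFunc.C α) ^ k *
      (algebraMap (Polynomial ℂ) (RatFunc ℂ) p / algebraMap (Polynomial ℂ) (RatFunc ℂ) q)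

/-- Entrywise embedding of a polynomial matrix into matrices over `RatFunc ℂ`. -/
noncomputable def matRF {n : ℕ} (M : Matrix (Fin n) (Fin n) (Polynomial ℂ)) :
    Matrix (Fin n) (Fin n) (RatFunc ℂ) :=
  M.map (algebraMap (Polynomial ℂ) (RatFunc ℂ))

/-- The `i`-th column of a polynomial matrix, regarded over `RatFunc ℂ`. -/
noncomputable def colRF {n : ℕ} (M : Matrix (Fin n) (Fin n) (Polynomial ℂ)) (i : Fin n) :
    Fin n → RatFunc ℂ :=
  fun k => algebraMap (Polynomial ℂ) (RatFunc ℂ) (M k i)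

/-- The `i`-th column of a polynomial matrix evaluated (entrywise) at `α`. -/
def evalCol {n : ℕ} (M : Matrix (Fin n) (Fin n) (Polynomial ℂ)) (i : Fin n) (α : ℂ) :
    Fin n → ℂ :=
  fun k => Polynomial.eval α (M k i)

/-!
Since `S⁻¹ D = Q T` and `D` is diagonal, `Q T_j = d_j Ŝ_j`, so `Q ψ_j = Ŝ_j`. A polynomial
matrix with constant nonzero determinant has no column vanishing at `β` (its evaluation at `β`
is still invertible), which gives `Ŝ_j(β) ≠ 0` and an entry `T_kj` with `T_kj(β) ≠ 0`. Orders
add under products, so a nonzero entry `d_j⁻¹ T_kj` of `ψ_j` has order `t + ord_β T_kj ≥ t`,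
with equality at such a `k`.
-/

theorem Matrix.mulVec_inv_diag_smul_col_of_mul_eq_mul {K ι : Type*} [Field K] [Fintype ι]
    [DecidableEq ι] {Q T S D : Matrix ι ι K} (hQT : Q * T = S * D) (hdiag : D.IsDiag)
    {j : ι} (hd : D j j ≠ 0) :
    Q.mulVec ((D j j)⁻¹ • fun i => T i j) = fun i => S i j := by
  have hcol : Q.mulVec (fun i => T i j) = fun i => S i j * D j j := by
    funext i
    change (Q * T) i j = _
    rw [hQT, ← hdiag.diagonal_diag, Matrix.mul_diagonal, Matrix.diagonal_apply_eq, Matrix.diag]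
  funext i
  rw [Matrix.mulVec_smul, hcol, Pi.smul_apply, smul_eq_mul, mul_comm, mul_assoc,
    mul_inv_cancel₀ hd, mul_one]

theorem evalCol_ne_zero_of_isUnit_det {n : ℕ} {M : Matrix (Fin n) (Fin n) (Polynomial ℂ)}
    (hM : IsUnit M.det) (j : Fin n) (β : ℂ) : evalCol M j β ≠ 0 := by
  intro hzero
  have hunit : IsUnit (M.map (Polynomial.evalRingHom β)).det := by
    have := hM.map (Polynomial.evalRingHom β)
    rwa [RingHom.map_det] at this
  exact hunit.ne_zero (Matrix.det_eq_zero_of_column_eq_zero j fun i => congrFun hzero i)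

theorem RatFunc.algebraMap_X_sub_C (β : ℂ) :
    algebraMap (Polynomial ℂ) (RatFunc ℂ) (Polynomial.X - Polynomial.C β)
      = RatFunc.X - RatFunc.C β := by
  rw [map_sub, RatFunc.algebraMap_X, RatFunc.algebraMap_C]

theorem RatFunc.X_sub_C_ne_zero (β : ℂ) : (RatFunc.X - RatFunc.C β : RatFunc ℂ) ≠ 0 := by
  rw [← RatFunc.algebraMap_X_sub_C]
  exact RatFunc.algebraMap_ne_zero (Polynomial.X_sub_C_ne_zero β)

namespace HasOrdAt

variable {β : ℂ} {r s : RatFunc ℂ} {k m : ℤ}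

theorem ne_zero (hr : HasOrdAt β r k) : r ≠ 0 := by
  obtain ⟨p, q, hp, hq, rfl⟩ := hr
  have hp' : p ≠ 0 := fun h => hp (by rw [h, Polynomial.eval_zero])
  have hq' : q ≠ 0 := fun h => hq (by rw [h, Polynomial.eval_zero])
  exact mul_ne_zero (zpow_ne_zero _ (RatFunc.X_sub_C_ne_zero β))
    (div_ne_zero (RatFunc.algebraMap_ne_zero hp') (RatFunc.algebraMap_ne_zero hq'))

theorem mul (hr : HasOrdAt β r k) (hs : HasOrdAt β s m) : HasOrdAt β (r * s) (k + m) := by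
  obtain ⟨p, q, hp, hq, rfl⟩ := hr
  obtain ⟨p', q', hp', hq', rfl⟩ := hs
  refine ⟨p * p', q * q', by simp [hp, hp'], by simp [hq, hq'], ?_⟩
  rw [zpow_add₀ (RatFunc.X_sub_C_ne_zero β), map_mul, map_mul]
  ring

theorem inv (hr : HasOrdAt β r k) : HasOrdAt β r⁻¹ (-k) := by
  obtain ⟨p, q, hp, hq, rfl⟩ := hr
  exact ⟨q, p, hq, hp, by rw [mul_inv, inv_div, ← zpow_neg]⟩

end HasOrdAt

theorem hasOrdAt_algebraMap (β : ℂ) {p : Polynomial ℂ} (hp : p ≠ 0) :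
    HasOrdAt β (algebraMap (Polynomial ℂ) (RatFunc ℂ) p) (p.rootMultiplicity β) := by
  refine ⟨p /ₘ (Polynomial.X - Polynomial.C β) ^ p.rootMultiplicity β, 1,
    Polynomial.eval_divByMonic_pow_rootMultiplicity_ne_zero β hp, by simp, ?_⟩
  conv_lhs => rw [← Polynomial.pow_mul_divByMonic_rootMultiplicity_eq p β]
  rw [map_one, div_one, map_mul, map_pow, zpow_natCast, RatFunc.algebraMap_X_sub_C]

theorem hasOrdAt_algebraMap_of_eval_ne_zero {β : ℂ} {p : Polynomial ℂ}
    (hp : p.eval β ≠ 0) : HasOrdAt β (algebraMap (Polynomial ℂ) (RatFunc ℂ) p) 0 :=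
  ⟨p, 1, hp, by simp, by rw [zpow_zero, one_mul, map_one, div_one]⟩

theorem pole_cancellation_function_of_Q_of_exact_order_general
    (n : ℕ)
    (Q : Matrix (Fin n) (Fin n) (RatFunc ℂ))
    (S T : Matrix (Fin n) (Fin n) (Polynomial ℂ))
    (hS : IsUnit S.det) (hT : IsUnit T.det)
    (D : Matrix (Fin n) (Fin n) (RatFunc ℂ))
    (hD : D = matRF S * Q * matRF T) (hdiag : D.IsDiag)
    (j : Fin n) (β : ℂ) (t : ℕ)
    (hpole : HasOrdAt β (D j j) (-(t : ℤ))) :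
    Q.mulVec ((D j j)⁻¹ • colRF T j) = colRF (S⁻¹) j ∧
    evalCol (S⁻¹) j β ≠ 0 ∧
    (∀ k : Fin n, ((D j j)⁻¹ • colRF T j) k ≠ 0 →
      ∃ m : ℤ, HasOrdAt β (((D j j)⁻¹ • colRF T j) k) m ∧ (t : ℤ) ≤ m) ∧
    (∃ k : Fin n, HasOrdAt β (((D j j)⁻¹ • colRF T j) k) (t : ℤ)) := by
  have hinv : HasOrdAt β (D j j)⁻¹ t := by simpa using hpole.inv
  have hleft : matRF (S⁻¹) * matRF S = 1 := by
    unfold matRF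
    rw [← Matrix.map_mul, Matrix.nonsing_inv_mul _ hS, Matrix.map_one _ (map_zero _) (map_one _)]
  have hQT : Q * matRF T = matRF (S⁻¹) * D := by
    rw [hD, ← Matrix.mul_assoc, ← Matrix.mul_assoc, hleft, Matrix.one_mul]
  refine ⟨Matrix.mulVec_inv_diag_smul_col_of_mul_eq_mul hQT hdiag hpole.ne_zero,
    evalCol_ne_zero_of_isUnit_det (Matrix.isUnit_nonsing_inv_det _ hS) j β, ?_, ?_⟩
  · intro k hk
    have hTk : T k j ≠ 0 := fun h => hk (by simp [colRF, h])
    exact ⟨_, hinv.mul (hasOrdAt_algebraMap β hTk), by omega⟩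
  · obtain ⟨k, hk⟩ := Function.ne_iff.mp (evalCol_ne_zero_of_isUnit_det hT j β)
    exact ⟨k, by simpa [colRF] using hinv.mul (hasOrdAt_algebraMap_of_eval_ne_zero hk)⟩

/-- In the diagonalization setting `D = S·Q·T`, if the diagonal entry
`d_j = D j j` has a pole of order `t ≥ 1` at `β` (i.e. `ord_β(d_j) = −t`), then for
`ψ_j := d_j⁻¹ • T_j` one has `Q.mulVec ψ_j = Ŝ_j` (the `j`-th column of `S⁻¹`),
`Ŝ_j(β) ≠ 0`, every nonzero component of `ψ_j` has order `≥ t` at `β`, and some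
component has order exactly `t`: `ψ_j` is a pole cancellation function of `Q` at `β`
of exact order `t`. -/
theorem pole_cancellation_function_of_Q_of_exact_order
    (n : ℕ) (hn : 1 ≤ n)
    (Q : Matrix (Fin n) (Fin n) (RatFunc ℂ)) (hQ : Q.det ≠ 0)
    (S T : Matrix (Fin n) (Fin n) (Polynomial ℂ))
    (hS : IsUnit S.det) (hT : IsUnit T.det)
    (D : Matrix (Fin n) (Fin n) (RatFunc ℂ))
    (hD : D = matRF S * Q * matRF T) (hdiag : D.IsDiag)
    (j : Fin n) (β : ℂ) (t : ℕ) (ht : 1 ≤ t)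
    (hpole : HasOrdAt β (D j j) (-(t : ℤ))) :
    Q.mulVec ((D j j)⁻¹ • colRF T j) = colRF (S⁻¹) j ∧
    evalCol (S⁻¹) j β ≠ 0 ∧
    (∀ k : Fin n, ((D j j)⁻¹ • colRF T j) k ≠ 0 →
      ∃ m : ℤ, HasOrdAt β (((D j j)⁻¹ • colRF T j) k) m ∧ (t : ℤ) ≤ m) ∧
    (∃ k : Fin n, HasOrdAt β (((D j j)⁻¹ • colRF T j) k) (t : ℤ)) :=
  pole_cancellation_function_of_Q_of_exact_order_general n Q S T hS hT D hD hdiag j β t hpole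
end

section
/- Let n ≥ 1 and m ≥ 1, let A_0, A_1, …, A_m be n×n complex matrices, and let α ∈ ℂ with α ≠ 0. Let r ≥ 1 and let φ⁽¹⁾, …, φ⁽ʳ⁾ : Fin n → ℂ each satisfy ∑_{k=0}^{m} α^{m−k} • (A_k).mulVec φ⁽ʲ⁾ = 0, let c_1, …, c_r ∈ ℂ, and set φ := ∑_{j=1}^{r} c_j • φ⁽ʲ⁾. If every component of φ is nonzero, then the vector function u i t := (φ i)⁻¹ * Complex.exp (α * t) satisfies, for every t ∈ ℂ, ∑_{k=0}^{m} (A_k).mulVec (fun i => (iteratedDeriv k (u i) t)⁻¹) = 0; that is, every linear combination of eigenvectors corresponding to the same zero α whose components are all nonzero gives a solution of the nonlinear system A_m (u^{(m)})^{−1} + ⋯ + A_0 u^{−1} = 0. -/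
/-!
Since `u⁽ᵏ⁾ i t = α ^ k e^{α t} / φ i`, the vector `(u⁽ᵏ⁾)⁻¹` is the multiple
`α⁻ᵏ e^{-α t} • φ` of `φ`, so the nonlinear system evaluated at `u` equals
`α⁻ᵐ e^{-α t} • ∑ₖ α^(m-k) • Aₖ φ`. This vanishes because the eigen-equation is linear in `φ`,
hence holds for every linear combination of its solutions.
-/

open Matrix

section EigenEquation

variable {R ι κ n : Type*} [CommRing R] [Fintype n] [Fintype κ]

theorem sum_smul_mulVec_eq_sum_smul_mulVec (w : κ → R) (A : κ → Matrix n n R) (v : n → R) :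
    ∑ k, w k • A k *ᵥ v = (∑ k, w k • A k) *ᵥ v := by
  simp only [sum_mulVec, smul_mulVec]

theorem sum_smul_mulVec_sum_smul_eq_zero (w : κ → R) (A : κ → Matrix n n R) (s : Finset ι)
    (c : ι → R) {φs : ι → n → R} (hφs : ∀ j ∈ s, ∑ k, w k • A k *ᵥ φs j = 0) :
    ∑ k, w k • A k *ᵥ ∑ j ∈ s, c j • φs j = 0 := by
  rw [sum_smul_mulVec_eq_sum_smul_mulVec, mulVec_sum]
  refine Finset.sum_eq_zero fun j hj => ?_
  rw [mulVec_smul, ← sum_smul_mulVec_eq_sum_smul_mulVec, hφs j hj, smul_zero]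

end EigenEquation

theorem sum_mulVec_inv_pow_smul {K n : Type*} [Field K] [Fintype n] {m : ℕ}
    (A : Fin (m + 1) → Matrix n n K) {α : K} (hα : α ≠ 0) (β : K) (v : n → K) :
    ∑ k : Fin (m + 1), A k *ᵥ (((α ^ (k : ℕ))⁻¹ * β) • v)
      = ((α ^ m)⁻¹ * β) • ∑ k : Fin (m + 1), α ^ (m - (k : ℕ)) • A k *ᵥ v := by
  rw [Finset.smul_sum]
  refine Finset.sum_congr rfl fun k _ => ?_
  have hα_pow : α ^ (m - (k : ℕ)) * α ^ (k : ℕ) = α ^ m := by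
    rw [← pow_add, Nat.sub_add_cancel (Nat.lt_succ_iff.mp k.isLt)]
  rw [mulVec_smul, smul_smul, ← hα_pow]
  congr 1
  field_simp

theorem inv_iteratedDeriv_inv_mul_cexp {n : Type*} (φ : n → ℂ) (α t : ℂ) (k : ℕ) :
    (fun i => (iteratedDeriv k (fun s => (φ i)⁻¹ * Complex.exp (α * s)) t)⁻¹)
      = ((α ^ k)⁻¹ * (Complex.exp (α * t))⁻¹) • φ := by
  funext i
  simp only [iteratedDeriv_const_mul_field, iteratedDeriv_cexp_const_mul, mul_inv, inv_inv,
    Pi.smul_apply, smul_eq_mul]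
  ring

theorem solution_of_nonlinear_system_from_linear_combination_of_eigenvectors_general
    (n m : ℕ)
    (A : Fin (m + 1) → Matrix (Fin n) (Fin n) ℂ)
    (α : ℂ) (hα : α ≠ 0)
    (r : ℕ)
    (φs : Fin r → Fin n → ℂ)
    (hφs : ∀ j : Fin r, ∑ k : Fin (m + 1), α ^ (m - (k : ℕ)) • (A k).mulVec (φs j) = 0)
    (c : Fin r → ℂ)
    (φ : Fin n → ℂ) (hφdef : φ = ∑ j : Fin r, c j • φs j) :
    ∀ t : ℂ,
      ∑ k : Fin (m + 1),
        (A k).mulVec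
          (fun i => (iteratedDeriv (k : ℕ) (fun s => (φ i)⁻¹ * Complex.exp (α * s)) t)⁻¹) = 0 := by
  intro t
  have hφ_eigen : ∑ k : Fin (m + 1), α ^ (m - (k : ℕ)) • A k *ᵥ φ = 0 := by
    subst hφdef
    exact sum_smul_mulVec_sum_smul_eq_zero _ A _ c fun j _ => hφs j
  simp only [inv_iteratedDeriv_inv_mul_cexp]
  rw [sum_mulVec_inv_pow_smul A hα, hφ_eigen, smul_zero]

/-- Let `A_0, …, A_m` be `n × n` complex matrices and `α ≠ 0`. Let
`φ⁽¹⁾, …, φ⁽ʳ⁾` (`r ≥ 1`) each satisfy `∑_{k=0}^m α^(m−k) • A_k.mulVec φ⁽ʲ⁾ = 0`, let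
`c_1, …, c_r ∈ ℂ` and set `φ := ∑_j c_j • φ⁽ʲ⁾`.  If every component of `φ` is
nonzero, then `u i t := (φ i)⁻¹ · exp (α t)` solves the nonlinear system
`A_m (u^(m))⁻¹ + ⋯ + A_0 u⁻¹ = 0` (inverses of vectors taken entrywise). -/
theorem solution_of_nonlinear_system_from_linear_combination_of_eigenvectors
    (n m : ℕ) (hn : 1 ≤ n) (hm : 1 ≤ m)
    (A : Fin (m + 1) → Matrix (Fin n) (Fin n) ℂ)
    (α : ℂ) (hα : α ≠ 0)
    (r : ℕ) (hr : 1 ≤ r)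
    (φs : Fin r → Fin n → ℂ)
    (hφs : ∀ j : Fin r, ∑ k : Fin (m + 1), α ^ (m - (k : ℕ)) • (A k).mulVec (φs j) = 0)
    (c : Fin r → ℂ)
    (φ : Fin n → ℂ) (hφdef : φ = ∑ j : Fin r, c j • φs j)
    (hφ : ∀ i, φ i ≠ 0) :
    ∀ t : ℂ,
      ∑ k : Fin (m + 1),
        (A k).mulVec
          (fun i => (iteratedDeriv (k : ℕ) (fun s => (φ i)⁻¹ * Complex.exp (α * s)) t)⁻¹) = 0 :=
  solution_of_nonlinear_system_from_linear_combination_of_eigenvectors_general n m A α hα r φs hφs c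
    φ hφdef
end

section
/- Let f : ℂ → ℂ be meromorphic on all of ℂ (MeromorphicOn f Set.univ) and suppose that the function z ↦ f(z⁻¹) is meromorphic at 0. Then the set {z ∈ ℂ : ¬ AnalyticAt ℂ f z} of points where f fails to be analytic is finite; that is, a function meromorphic on the extended complex plane has only finitely many poles. -/
open Filter Bornology

section

variable {𝕜 E : Type*} [NontriviallyNormedField 𝕜] [NormedAddCommGroup E] [NormedSpace 𝕜 E]
  {f : 𝕜 → E}

/-- Since `f = (fun w ↦ f w⁻¹) ∘ Inv.inv`, analyticity of `w ↦ f w⁻¹` on a punctured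
neighbourhood of `0` is analyticity of `f` near infinity. -/
theorem MeromorphicAt.eventually_analyticAt_cobounded_of_comp_inv [CompleteSpace E]
    (hf : MeromorphicAt (fun w ↦ f w⁻¹) 0) :
    ∀ᶠ z in cobounded 𝕜, AnalyticAt 𝕜 f z := by
  filter_upwards [tendsto_inv₀_cobounded'.eventually hf.eventually_analyticAt,
    tendsto_inv₀_cobounded'.eventually self_mem_nhdsWithin] with z hz hz0
  simpa [Function.comp_def] using hz.comp (analyticAt_inv (𝕜 := 𝕜) (inv_eq_zero.not.mp hz0))

theorem MeromorphicOn.finite_setOf_not_analyticAt_s15 [ProperSpace 𝕜]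
    (hf : MeromorphicOn f Set.univ) (hf_cobounded : ∀ᶠ z in cobounded 𝕜, AnalyticAt 𝕜 f z) :
    {z | ¬AnalyticAt 𝕜 f z}.Finite := by
  rw [Metric.cobounded_eq_cocompact] at hf_cobounded
  obtain ⟨K, hK, hKf⟩ := mem_cocompact.mp hf_cobounded
  have h_codiscrete := (hf.mono_set (Set.subset_univ K)).analyticAt_mem_codiscreteWithin
  refine (hK.finite_sdiff_of_mem_codiscreteWithin h_codiscrete).subset fun z hz ↦ ⟨?_, hz⟩
  by_contra hzK
  exact hz (hKf hzK)

end

/-- A function meromorphic on the extended complex plane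
(i.e. meromorphic on all of `ℂ` and such that `z ↦ f z⁻¹` is meromorphic at `0`)
fails to be analytic at only finitely many points: it has only finitely many poles. -/
theorem finitely_many_poles_of_meromorphic_on_extended_plane
    (f : ℂ → ℂ) (h1 : MeromorphicOn f Set.univ)
    (h2 : MeromorphicAt (fun z : ℂ => f z⁻¹) 0) :
    {z : ℂ | ¬ AnalyticAt ℂ f z}.Finite :=
  h1.finite_setOf_not_analyticAt_s15 h2.eventually_analyticAt_cobounded_of_comp_inv
end
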